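/- arXiv:1710.06627 — 4 statements merged into one kernel-verified Lean document; each statement's English description precedes it below -/
import Mathlib

section
/- Let k be a field, let N be a positive integer, and let h : ℤ × ℤ → kˣ be a family of nonzero elements of k. Define λ_{a,b} := ∏_{j=b}^{b+N-1} h_{a,j} for a, b ∈ ℤ. Then there exists a family c : ℤ × ℤ → kˣ satisfying (i) ∏_{j=a}^{a+N-1} c_{j,b} = h_{a,b} for all a, b ∈ ℤ, (ii) c_{a,a} = 1 for all a ∈ ℤ, and (iii) c_{a,b} · c_{b,a} = 1 for all a, b ∈ ℤ, if and only if λ_{a,a} = 1 for all a ∈ ℤ and λ_{a,b} · λ_{b,a} = 1 for all a, b ∈ ℤ. -/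
/-!
Write the problem additively and put `(S f) a = ∑_{j=a}^{a+N-1} f j`. We need an alternating `c`
with `S c(·, b) = h(·, b)`, and the conditions say that `λ(a, b) = (S h(a, ·)) b` is alternating.
Necessity: `λ(a, b) = ∑_{j ∈ [b, b+N-1]} ∑_{i ∈ [a, a+N-1]} c(i, j)`, and the sum of an alternating
function over a square vanishes.

Sufficiency: `S` has a right inverse with finitely supported kernel, i.e. `ℓ : ℤ → (ℤ →₀ ℤ)` with
`∑_{j=a}^{a+N-1} ℓ j = δ_a`; it comes from solving `Q (a + N) = Q a + δ_a` on each residue class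
mod `N` and setting `ℓ j = Q (j + 1) - Q j`. With `u(a, b) = ⟨ℓ a, h(·, b)⟩`, the family `u - uᵀ`
solves the equation up to the error `⟨ℓ b, λ(·, a)⟩`, and this error is produced exactly by the Gram
form of `(x, y) ↦ λ(y, x)` evaluated at `(ℓ a, ℓ b)`. That Gram form is alternating because its Gram
matrix is; symmetrizing instead would need division by 2.
-/

open Finset

theorem sum_Icc_eq_sum_range {M : Type*} [AddCommMonoid M] (f : ℤ → M) (a : ℤ) (N : ℕ) :
    ∑ j ∈ Icc a (a + N - 1), f j = ∑ i ∈ range N, f (a + i) := by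
  rw [Icc_sub_one_right_eq_Ico]
  induction N with
  | zero => simp
  | succ N ih =>
    rw [sum_range_succ, ← ih, Nat.cast_succ, ← add_assoc,
      ← insert_Ico_right_eq_Ico_add_one (by omega), sum_insert (by simp), add_comm]

namespace Int

variable {G : Type*} [AddCommGroup G]

theorem exists_add_one_eq_add (d : ℤ → G) : ∃ Z : ℤ → G, ∀ q, Z (q + 1) = Z q + d q := by
  refine ⟨fun q => ∑ i ∈ Ico 0 q, d i - ∑ i ∈ Ico q 0, d i, fun q => ?_⟩
  dsimp only
  rcases le_or_gt 0 q with hq | hq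
  · rw [← insert_Ico_right_eq_Ico_add_one hq, sum_insert (by simp),
      Ico_eq_empty_of_le (by omega : (0 : ℤ) ≤ q + 1), Ico_eq_empty_of_le hq]
    abel
  · rw [← insert_Ico_add_one_left_eq_Ico hq, sum_insert (by simp),
      Ico_eq_empty_of_le (by omega : q + 1 ≤ 0), Ico_eq_empty_of_le hq.le]
    abel

theorem exists_add_natCast_eq_add (N : ℕ) (hN : 0 < N) (d : ℤ → G) :
    ∃ Q : ℤ → G, ∀ a, Q (a + N) = Q a + d a := by
  choose Z hZ using fun r : ℤ => exists_add_one_eq_add fun q => d (r + N * q)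
  refine ⟨fun a => Z (a % N) (a / N), fun a => ?_⟩
  have hN' : (N : ℤ) ≠ 0 := by omega
  simp only [add_emod_right, add_ediv_of_dvd_right (dvd_refl _), Int.ediv_self hN', hZ,
    emod_add_mul_ediv]

theorem exists_sum_Icc_eq (N : ℕ) (hN : 0 < N) (g : ℤ → G) :
    ∃ f : ℤ → G, ∀ a : ℤ, ∑ j ∈ Icc a (a + (N : ℤ) - 1), f j = g a := by
  obtain ⟨Q, hQ⟩ := exists_add_natCast_eq_add N hN g
  refine ⟨fun j => Q (j + 1) - Q j, fun a => ?_⟩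
  have telescope := sum_range_sub (fun i : ℕ => Q (a + i)) N
  push_cast [← add_assoc] at telescope
  rw [sum_Icc_eq_sum_range, telescope, hQ, add_zero, add_sub_cancel_left]

end Int

theorem Finsupp.lift_apply_single_one {R M X : Type*} [Semiring R] [AddCommMonoid M] [Module R M]
    (g : X → M) (x : X) : Finsupp.lift M R X g (Finsupp.single x 1) = g x := by
  simp

section GramForm

variable {R X A : Type*} [CommRing R] [AddCommGroup A] [Module R A]

noncomputable def gramForm (L : X → X → A) : (X →₀ R) →ₗ[R] (X →₀ R) →ₗ[R] A :=
  Finsupp.lift _ R X fun x => Finsupp.lift A R X (L x)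

theorem gramForm_single_one_left (L : X → X → A) (x : X) :
    gramForm L (Finsupp.single x (1 : R)) = Finsupp.lift A R X (L x) :=
  Finsupp.lift_apply_single_one _ x

theorem gramForm_single_single (L : X → X → A) (x y : X) (m n : R) :
    gramForm L (Finsupp.single x m) (Finsupp.single y n) = (m * n) • L x y := by
  simp [gramForm, mul_smul, smul_comm m n]

theorem gramForm_add_swap {L : X → X → A} (hL : ∀ x y, L x y + L y x = 0) (p q : X →₀ R) :
    gramForm L p q + gramForm L q p = 0 := by
  induction p using Finsupp.induction_linear generalizing q with
  | zero => simp
  | add p₁ p₂ h₁ h₂ =>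
    simp only [map_add, LinearMap.add_apply]
    linear_combination (norm := abel1) h₁ q + h₂ q
  | single x m =>
    induction q using Finsupp.induction_linear with
    | zero => simp
    | add q₁ q₂ h₁ h₂ =>
      simp only [map_add, LinearMap.add_apply]
      linear_combination (norm := abel1) h₁ + h₂
    | single y n =>
      rw [gramForm_single_single, gramForm_single_single, mul_comm n, ← smul_add, hL, smul_zero]

theorem gramForm_self {L : X → X → A} (hL₀ : ∀ x, L x x = 0) (hL : ∀ x y, L x y + L y x = 0)
    (p : X →₀ R) : gramForm L p p = 0 := by
  induction p using Finsupp.induction_linear with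
  | zero => simp
  | add p₁ p₂ h₁ h₂ =>
    simp only [map_add, LinearMap.add_apply, h₁, h₂]
    linear_combination (norm := abel1) gramForm_add_swap hL p₁ p₂
  | single x m => rw [gramForm_single_single, hL₀, smul_zero]

end GramForm

section WindowEquation

variable {A : Type*} [AddCommGroup A]

theorem Finset.sum_sum_eq_zero_of_alternating {X : Type*} {L : X → X → A} (hL₀ : ∀ x, L x x = 0)
    (hL : ∀ x y, L x y + L y x = 0) (s : Finset X) : ∑ x ∈ s, ∑ y ∈ s, L x y = 0 := by
  have := gramForm_self (R := ℤ) hL₀ hL (∑ x ∈ s, Finsupp.single x 1)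
  simp only [map_sum, LinearMap.sum_apply, gramForm_single_single, mul_one, one_smul] at this
  rwa [sum_comm] at this

theorem exists_alternating_sum_Icc_eq (N : ℕ) (hN : 0 < N) (h : ℤ × ℤ → A)
    (hdiag : ∀ a : ℤ, ∑ j ∈ Icc a (a + (N : ℤ) - 1), h (a, j) = 0)
    (hswap : ∀ a b : ℤ, ∑ j ∈ Icc b (b + (N : ℤ) - 1), h (a, j) +
        ∑ j ∈ Icc a (a + (N : ℤ) - 1), h (b, j) = 0) :
    ∃ c : ℤ × ℤ → A,
      (∀ a b : ℤ, ∑ j ∈ Icc a (a + (N : ℤ) - 1), c (j, b) = h (a, b)) ∧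
      (∀ a : ℤ, c (a, a) = 0) ∧ (∀ a b : ℤ, c (a, b) + c (b, a) = 0) := by
  obtain ⟨ℓ, hℓ⟩ := Int.exists_sum_Icc_eq N hN fun a => Finsupp.single a (1 : ℤ)
  set L : ℤ → ℤ → A := fun x y => ∑ j ∈ Icc x (x + (N : ℤ) - 1), h (y, j)
  have hL₀ : ∀ x, L x x = 0 := hdiag
  have hL : ∀ x y, L x y + L y x = 0 := fun x y => hswap y x
  let u : ℤ × ℤ → A := fun p => Finsupp.lift A ℤ ℤ (fun x => h (x, p.2)) (ℓ p.1)
  refine ⟨fun p => u p - u p.swap + gramForm L (ℓ p.1) (ℓ p.2), fun a b => ?_, fun a => ?_,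
    fun a b => ?_⟩
  · simp only [u, sum_add_distrib, sum_sub_distrib, Prod.swap, ← map_sum, ← LinearMap.sum_apply,
      hℓ, Finsupp.lift_apply_single_one, gramForm_single_one_left]
    rw [sum_fn]
    exact sub_add_cancel _ _
  · simp [gramForm_self hL₀ hL]
  · dsimp only [u, Prod.swap]
    linear_combination (norm := abel1) gramForm_add_swap hL (ℓ a) (ℓ b)

theorem exists_alternating_sum_Icc_eq_iff (N : ℕ) (hN : 0 < N) (h : ℤ × ℤ → A) :
    (∃ c : ℤ × ℤ → A,
      (∀ a b : ℤ, ∑ j ∈ Icc a (a + (N : ℤ) - 1), c (j, b) = h (a, b)) ∧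
      (∀ a : ℤ, c (a, a) = 0) ∧ (∀ a b : ℤ, c (a, b) + c (b, a) = 0)) ↔
    ((∀ a : ℤ, ∑ j ∈ Icc a (a + (N : ℤ) - 1), h (a, j) = 0) ∧
     (∀ a b : ℤ, ∑ j ∈ Icc b (b + (N : ℤ) - 1), h (a, j) +
        ∑ j ∈ Icc a (a + (N : ℤ) - 1), h (b, j) = 0)) := by
  refine ⟨fun ⟨c, hc, hc₀, hc_swap⟩ => ⟨fun a => ?_, fun a b => ?_⟩,
    fun ⟨hdiag, hswap⟩ => exists_alternating_sum_Icc_eq N hN h hdiag hswap⟩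
  · simp only [← hc]
    exact sum_sum_eq_zero_of_alternating (L := fun j i => c (i, j)) hc₀ (fun j i => hc_swap i j) _
  · simp only [← hc]
    rw [sum_comm (s := Icc a _), ← sum_add_distrib]
    exact sum_eq_zero fun j _ => by
      rw [← sum_add_distrib]
      exact sum_eq_zero fun i _ => hc_swap i j

end WindowEquation

/-- Let `k` be a field, `N` a positive integer, and
`h : ℤ × ℤ → kˣ` a family of nonzero elements of `k`.  Setting
`λ_{a,b} := ∏_{j=b}^{b+N-1} h_{a,j}`, the multiplicative system
`∏_{j=a}^{a+N-1} c_{j,b} = h_{a,b}`, `c_{a,a} = 1`, `c_{a,b} c_{b,a} = 1`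
has a solution `c : ℤ × ℤ → kˣ` if and only if `λ_{a,a} = 1` for all `a`
and `λ_{a,b} λ_{b,a} = 1` for all `a, b`. -/
theorem stmt0 {k : Type*} [Field k] (N : ℕ) (hN : 0 < N) (h : ℤ × ℤ → kˣ) :
    (∃ c : ℤ × ℤ → kˣ,
      (∀ a b : ℤ, ∏ j ∈ Finset.Icc a (a + (N : ℤ) - 1), c (j, b) = h (a, b)) ∧
      (∀ a : ℤ, c (a, a) = 1) ∧
      (∀ a b : ℤ, c (a, b) * c (b, a) = 1)) ↔
    ((∀ a : ℤ, (∏ j ∈ Finset.Icc a (a + (N : ℤ) - 1), h (a, j)) = 1) ∧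
     (∀ a b : ℤ,
        (∏ j ∈ Finset.Icc b (b + (N : ℤ) - 1), h (a, j)) *
        (∏ j ∈ Finset.Icc a (a + (N : ℤ) - 1), h (b, j)) = 1)) :=
  -- `Additive kˣ` is `kˣ` itself, with `∏`, `*`, `1` unfolding to `∑`, `+`, `0`.
  exists_alternating_sum_Icc_eq_iff (A := Additive kˣ) N hN h
end

section
/- Let k be a field, let N be a positive integer, and let h : ℤ × ℤ → kˣ be a family of nonzero elements of k. Define λ_{a,b} := ∏_{j=b}^{b+N-1} h_{a,j} for a, b ∈ ℤ, and assume λ_{a,a} = 1 for all a ∈ ℤ and λ_{a,b} · λ_{b,a} = 1 for all a, b ∈ ℤ. Let c⁰ be any family of nonzero elements of k indexed by pairs (a,b) with 0 ≤ a, b ≤ N−2 such that c⁰_{a,a} = 1 and c⁰_{a,b} · c⁰_{b,a} = 1 for all 0 ≤ a, b ≤ N−2. Then there exists a family c : ℤ × ℤ → kˣ satisfying (i) ∏_{j=a}^{a+N-1} c_{j,b} = h_{a,b} for all a, b ∈ ℤ, (ii) c_{a,a} = 1 for all a ∈ ℤ, (iii) c_{a,b} · c_{b,a} = 1 for all a,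 b ∈ ℤ, and (iv) c_{a,b} = c⁰_{a,b} whenever 0 ≤ a, b ≤ N−2. -/
/-!
Write `kˣ` additively; the argument works in any abelian group. Sliding the window by one step,
(i) amounts to (i) at `a = 0` plus the recursion
`c (a + N, b) = c (a, b) + (h (a + 1, b) - h (a, b))`, which antisymmetry turns into a recursion
in `b`. The two recursions are compatible because the mixed second difference of the
antisymmetric `λ` is antisymmetric, so they extend arbitrary values on the square `[0, N)²`, and
(i)–(iii) only have to be checked on that square. There `c⁰` is completed by a last row forced by
the column sums and a last column forced by antisymmetry; the corner is consistent because
`λ_{0,0} = 1` and the double sum of the antisymmetric `c⁰` vanishes.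
-/

open Finset Function

theorem Function.Periodic.map_emod {α : Type*} {f : ℤ → α} {c : ℤ} (hf : Periodic f c)
    (n : ℤ) : f (n % c) = f n := by
  rw [Int.emod_def, mul_comm]
  exact hf.sub_int_mul_eq _

theorem Function.Periodic.eq_of_forall_mem_Ico {α : Type*} {f : ℤ → α} {c : ℤ}
    (hf : Periodic f c) (hc : 0 < c) {y : α} (hy : ∀ n ∈ Ico 0 c, f n = y) (n : ℤ) :
    f n = y := by
  rw [← hf.map_emod]
  exact hy _ (mem_Ico.2 ⟨Int.emod_nonneg n hc.ne', Int.emod_lt_of_pos n hc⟩)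

section AddCommGroup

variable {G : Type*} [AddCommGroup G]

theorem exists_add_one_eq_add (f : ℤ → G) : ∃ g : ℤ → G, ∀ n, g (n + 1) = g n + f n := by
  refine ⟨fun n => ∑ i ∈ Ico 0 n, f i - ∑ i ∈ Ico n 0, f i, fun n => ?_⟩
  dsimp only
  rcases le_or_gt 0 n with hn | hn
  · rw [← insert_Ico_right_eq_Ico_add_one hn, sum_insert (by simp), Ico_eq_empty_of_le hn,
      Ico_eq_empty_of_le (by omega : (0 : ℤ) ≤ n + 1)]
    abel
  · rw [← insert_Ico_add_one_left_eq_Ico hn, sum_insert (by simp), Ico_eq_empty_of_le hn.le,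
      Ico_eq_empty_of_le (by omega : n + 1 ≤ 0)]
    abel

theorem exists_add_eq_add_eqOn_Ico {N : ℤ} (hN : N ≠ 0) (f g₀ : ℤ → G) :
    ∃ g : ℤ → G, (∀ n, g (n + N) = g n + f n) ∧ ∀ n ∈ Ico 0 N, g n = g₀ n := by
  -- solve the one-step recursion along each residue class `r + N ℤ`
  choose F hF using fun r => exists_add_one_eq_add fun m => f (r + m * N)
  refine ⟨fun n => F (n % N) (n / N) - F (n % N) 0 + g₀ (n % N), fun n => ?_, fun n hn => ?_⟩
  · have hdiv : (n + N) / N = n / N + 1 := by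
      rw [← Int.add_mul_ediv_right n 1 hN, one_mul]
    simp only [Int.add_emod_right, hdiv, hF, Int.emod_add_ediv_mul]
    abel
  · obtain ⟨hn₀, hnN⟩ := mem_Ico.1 hn
    simp [Int.emod_eq_of_lt hn₀ hnN, Int.ediv_eq_zero_of_lt hn₀ hnN]

theorem sum_product_self_eq_zero_of_antisymm {ι : Type*} [DecidableEq ι] (s : Finset ι)
    {f : ι × ι → G} (hdiag : ∀ i ∈ s, f (i, i) = 0)
    (hanti : ∀ i ∈ s, ∀ j ∈ s, f (i, j) + f (j, i) = 0) : ∑ p ∈ s ×ˢ s, f p = 0 := by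
  refine sum_involution (fun p _ => p.swap) (fun p hp => ?_) (fun p hp hfp hswap => ?_)
    (fun p hp => by simpa [and_comm] using hp) (fun p _ => p.swap_swap)
  · rw [mem_product] at hp
    exact hanti _ hp.1 _ hp.2
  · obtain ⟨i, j⟩ := p
    obtain rfl : j = i := congrArg Prod.fst hswap
    exact hfp (hdiag _ (mem_product.1 hp).1)

theorem exists_antisymm_extension_with_column_sums {N : ℤ} (hN : 0 < N) (e : ℤ × ℤ → G)
    (he_diag : ∀ a ∈ Ico 0 (N - 1), e (a, a) = 0)
    (he_anti : ∀ a ∈ Ico 0 (N - 1), ∀ b ∈ Ico 0 (N - 1), e (a, b) + e (b, a) = 0)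
    (s : ℤ → G) (hs : ∑ b ∈ Ico 0 N, s b = 0) :
    ∃ d : ℤ × ℤ → G, (∀ a ∈ Ico 0 N, d (a, a) = 0) ∧
      (∀ a ∈ Ico 0 N, ∀ b ∈ Ico 0 N, d (a, b) + d (b, a) = 0) ∧
      (∀ b ∈ Ico 0 N, ∑ a ∈ Ico 0 N, d (a, b) = s b) ∧
      ∀ a ∈ Ico 0 (N - 1), ∀ b ∈ Ico 0 (N - 1), d (a, b) = e (a, b) := by
  set m := N - 1
  have hsplit : Ico 0 N = insert m (Ico 0 m) := (insert_Ico_sub_one_right_eq_Ico hN).symm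
  have hm : m ∉ Ico 0 m := by simp
  have hlt : ∀ a ∈ Ico 0 N, ¬a < m → a = m := fun a ha ham => by
    rw [mem_Ico] at ha; omega
  set E : ℤ → G := fun b => s b - ∑ a ∈ Ico 0 m, e (a, b)
  refine ⟨fun p => if p.1 < m then (if p.2 < m then e p else -E p.1)
      else (if p.2 < m then E p.2 else 0), fun a ha => ?_, fun a ha b hb => ?_,
      fun b hb => ?_, fun a ha b hb => ?_⟩
  · dsimp only
    split_ifs with ham
    · exact he_diag a (mem_Ico.2 ⟨(mem_Ico.1 ha).1, ham⟩)
    · rfl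
  · dsimp only
    split_ifs with ham hbm hbm
    · exact he_anti a (mem_Ico.2 ⟨(mem_Ico.1 ha).1, ham⟩) b (mem_Ico.2 ⟨(mem_Ico.1 hb).1, hbm⟩)
    · exact neg_add_cancel _
    · exact add_neg_cancel _
    · exact add_zero 0
  · rw [hsplit, sum_insert hm]
    simp only [lt_irrefl, if_false]
    by_cases hbm : b < m
    · rw [sum_congr rfl fun a ha => if_pos (mem_Ico.1 ha).2]
      simp only [if_pos hbm, E]
      exact sub_add_cancel _ _
    · obtain rfl := hlt b hb hbm
      have hsq : ∑ a ∈ Ico 0 m, ∑ a' ∈ Ico 0 m, e (a', a) = 0 := by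
        rw [sum_comm, ← sum_product']
        exact sum_product_self_eq_zero_of_antisymm _ he_diag he_anti
      rw [hsplit, sum_insert hm] at hs
      rw [sum_congr rfl fun a ha => if_pos (mem_Ico.1 ha).2]
      simp only [if_neg hbm, sum_neg_distrib, E, sum_sub_distrib, hsq]
      linear_combination (norm := abel) -hs
  · simp [(mem_Ico.1 ha).2, (mem_Ico.1 hb).2]

noncomputable def windowSum (N : ℕ) (f : ℤ → G) (a : ℤ) : G := ∑ j ∈ Ico a (a + N), f j

theorem windowSum_add_one (N : ℕ) (f : ℤ → G) (a : ℤ) :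
    windowSum N f (a + 1) = windowSum N f a + f (a + N) - f a := by
  refine eq_sub_of_add_eq ?_
  rw [windowSum, windowSum, add_comm, ← sum_insert (by simp : a ∉ Ico (a + 1) (a + 1 + N)),
    insert_Ico_add_one_left_eq_Ico (by omega), add_comm _ (f _),
    ← sum_insert (by simp : a + N ∉ Ico a (a + N)), insert_Ico_right_eq_Ico_add_one (by omega),
    add_right_comm]

theorem windowSum_sub (N : ℕ) (f g : ℤ → G) (a : ℤ) :
    windowSum N (fun j => f j - g j) a = windowSum N f a - windowSum N g a :=
  sum_sub_distrib ..

section Lambda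

variable (h : ℤ × ℤ → G) (N : ℕ)

noncomputable def lam (x y : ℤ) : G := windowSum N (fun j => h (x, j)) y

theorem lam_add_one_right (x y : ℤ) :
    lam h N x (y + 1) = lam h N x y + h (x, y + N) - h (x, y) :=
  windowSum_add_one N _ y

theorem windowSum_fst_diff (x y : ℤ) :
    windowSum N (fun j => h (x + 1, j) - h (x, j)) y = lam h N (x + 1) y - lam h N x y :=
  windowSum_sub N _ _ y

theorem fst_diff_sub_fst_diff (x y : ℤ) :
    (h (x + 1, y + N) - h (x, y + N)) - (h (x + 1, y) - h (x, y)) =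
      lam h N (x + 1) (y + 1) - lam h N (x + 1) y - (lam h N x (y + 1) - lam h N x y) := by
  rw [lam_add_one_right, lam_add_one_right]
  abel

variable {h N} (hanti : ∀ a b, lam h N a b + lam h N b a = 0)
include hanti

theorem lam_add_one_left (x y : ℤ) :
    lam h N (x + 1) y = lam h N x y + h (y, x) - h (y, x + N) := by
  linear_combination (norm := abel) hanti (x + 1) y - lam_add_one_right h N y x - hanti x y

theorem fst_diff_sub_fst_diff_antisymm (x y : ℤ) :
    (h (x + 1, y + N) - h (x, y + N)) - (h (x + 1, y) - h (x, y)) +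
      ((h (y + 1, x + N) - h (y, x + N)) - (h (y + 1, x) - h (y, x))) = 0 := by
  rw [fst_diff_sub_fst_diff, fst_diff_sub_fst_diff]
  linear_combination (norm := abel)
    hanti (x + 1) (y + 1) - hanti (x + 1) y - hanti x (y + 1) + hanti x y

theorem fst_diff_self_add (hdiag : ∀ a, lam h N a a = 0) (a : ℤ) :
    h (a + 1, a + N) - h (a, a + N) = h (a + 1, a) - h (a, a) := by
  rw [← sub_eq_zero, fst_diff_sub_fst_diff]
  linear_combination (norm := abel) hdiag (a + 1) - hanti (a + 1) a + hdiag a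

end Lambda

section Extension

variable {h : ℤ × ℤ → G} {N : ℕ}

theorem exists_doubly_recursive_extension (hN : 0 < N)
    (hanti : ∀ a b, lam h N a b + lam h N b a = 0) (d : ℤ × ℤ → G) :
    ∃ c : ℤ × ℤ → G, (∀ a b, c (a + N, b) = c (a, b) + (h (a + 1, b) - h (a, b))) ∧
      (∀ a b, c (a, b + N) = c (a, b) - (h (b + 1, a) - h (b, a))) ∧
      ∀ a ∈ Ico (0 : ℤ) N, ∀ b ∈ Ico (0 : ℤ) N, c (a, b) = d (a, b) := by
  have hN' : (0 : ℤ) < N := by exact_mod_cast hN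
  choose row hrow_step hrow_init using fun a =>
    exists_add_eq_add_eqOn_Ico hN'.ne' (fun b => -(h (b + 1, a) - h (b, a))) (fun b => d (a, b))
  choose col hcol_step hcol_init using fun b =>
    exists_add_eq_add_eqOn_Ico hN'.ne' (fun a => h (a + 1, b) - h (a, b)) (fun a => row a b)
  refine ⟨fun p => col p.2 p.1, fun a b => hcol_step b a, fun a b => ?_,
    fun a ha b hb => by simp only [hcol_init b a ha, hrow_init a b hb]⟩
  -- the defect of the second recursion is `N`-periodic in `a` and vanishes on the first rows
  have hper : Periodic (fun a => col (b + N) a - (col b a - (h (b + 1, a) - h (b, a)))) N :=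
    fun a => by
      simp only [hcol_step]
      linear_combination (norm := abel) fst_diff_sub_fst_diff_antisymm hanti a b
  refine sub_eq_zero.1 (hper.eq_of_forall_mem_Ico hN' (fun a ha => ?_) a)
  simp only [hcol_init _ a ha, hrow_step]
  abel

variable {c : ℤ × ℤ → G} (hc₁ : ∀ a b, c (a + N, b) = c (a, b) + (h (a + 1, b) - h (a, b)))
  (hc₂ : ∀ a b, c (a, b + N) = c (a, b) - (h (b + 1, a) - h (b, a)))
include hc₁ hc₂

theorem add_swap_eq_zero_of_mem_Ico (hN : 0 < N)
    (hsq : ∀ a ∈ Ico (0 : ℤ) N, ∀ b ∈ Ico (0 : ℤ) N, c (a, b) + c (b, a) = 0) (a b : ℤ) :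
    c (a, b) + c (b, a) = 0 := by
  have hN' : (0 : ℤ) < N := by exact_mod_cast hN
  have hper_fst : ∀ b, Periodic (fun a => c (a, b) + c (b, a)) N := fun b a => by
    simp only [hc₁, hc₂]
    abel
  have hper_snd : ∀ a, Periodic (fun b => c (a, b) + c (b, a)) N := fun a b => by
    simp only [hc₁, hc₂]
    abel
  exact (hper_fst b).eq_of_forall_mem_Ico hN'
    (fun a ha => (hper_snd a).eq_of_forall_mem_Ico hN' (hsq a ha) b) a

theorem diag_eq_zero_of_mem_Ico (hN : 0 < N) (hdiag : ∀ a, lam h N a a = 0)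
    (hanti : ∀ a b, lam h N a b + lam h N b a = 0) (hsq : ∀ a ∈ Ico (0 : ℤ) N, c (a, a) = 0)
    (a : ℤ) : c (a, a) = 0 := by
  have hper : Periodic (fun a => c (a, a)) N := fun a => by
    simp only [hc₁, hc₂, fst_diff_self_add hanti hdiag]
    abel
  exact hper.eq_of_forall_mem_Ico (by exact_mod_cast hN) hsq a

theorem windowSum_eq_of_mem_Ico (hN : 0 < N) (hanti : ∀ a b, lam h N a b + lam h N b a = 0)
    (hsq : ∀ b ∈ Ico (0 : ℤ) N, ∑ a ∈ Ico (0 : ℤ) N, c (a, b) = h (0, b)) (a b : ℤ) :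
    windowSum N (fun j => c (j, b)) a = h (a, b) := by
  have hper_snd : Periodic (fun b => windowSum N (fun j => c (j, b)) 0 - h (0, b)) N :=
    fun b => by
      simp only [hc₂]
      rw [windowSum_sub, windowSum_fst_diff, lam_add_one_left hanti]
      abel
  have hcol : windowSum N (fun j => c (j, b)) 0 = h (0, b) := by
    refine sub_eq_zero.1 (hper_snd.eq_of_forall_mem_Ico (by exact_mod_cast hN) (fun b hb => ?_) b)
    simp [windowSum, hsq b hb]
  have hper_fst : Periodic (fun a => windowSum N (fun j => c (j, b)) a - h (a, b)) 1 :=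
    fun a => by
      simp only [windowSum_add_one, hc₁]
      abel
  have := hper_fst.map_emod a
  simp only [Int.emod_one, hcol, sub_self] at this
  exact sub_eq_zero.1 this.symm

omit hc₁ hc₂

theorem exists_antisymm_windowSum_eq (hN : 0 < N) (hdiag : ∀ a, lam h N a a = 0)
    (hanti : ∀ a b, lam h N a b + lam h N b a = 0) (d : ℤ × ℤ → G)
    (hd_diag : ∀ a ∈ Ico (0 : ℤ) N, d (a, a) = 0)
    (hd_anti : ∀ a ∈ Ico (0 : ℤ) N, ∀ b ∈ Ico (0 : ℤ) N, d (a, b) + d (b, a) = 0)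
    (hd_col : ∀ b ∈ Ico (0 : ℤ) N, ∑ a ∈ Ico (0 : ℤ) N, d (a, b) = h (0, b)) :
    ∃ c : ℤ × ℤ → G, (∀ a b, windowSum N (fun j => c (j, b)) a = h (a, b)) ∧
      (∀ a, c (a, a) = 0) ∧ (∀ a b, c (a, b) + c (b, a) = 0) ∧
      ∀ a ∈ Ico (0 : ℤ) N, ∀ b ∈ Ico (0 : ℤ) N, c (a, b) = d (a, b) := by
  obtain ⟨c, hc₁, hc₂, hcd⟩ := exists_doubly_recursive_extension hN hanti d
  refine ⟨c, windowSum_eq_of_mem_Ico hc₁ hc₂ hN hanti fun b hb => ?_,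
    diag_eq_zero_of_mem_Ico hc₁ hc₂ hN hdiag hanti fun a ha => ?_,
    add_swap_eq_zero_of_mem_Ico hc₁ hc₂ hN fun a ha b hb => ?_, hcd⟩
  · rw [← hd_col b hb]
    exact sum_congr rfl fun a ha => hcd a ha b hb
  · rw [hcd a ha a ha, hd_diag a ha]
  · rw [hcd a ha b hb, hcd b hb a ha, hd_anti a ha b hb]

end Extension

end AddCommGroup

theorem toMul_windowSum {M : Type*} [CommGroup M] (N : ℕ) (f : ℤ → Additive M) (a : ℤ) :
    (windowSum N f a).toMul = ∏ j ∈ Icc a (a + N - 1), (f j).toMul := by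
  rw [windowSum, toMul_sum, Icc_sub_one_right_eq_Ico]

/-- Let `k` be a field, `N` a positive integer, and
`h : ℤ × ℤ → kˣ`.  Set `λ_{a,b} := ∏_{j=b}^{b+N-1} h_{a,j}` and assume
`λ_{a,a} = 1` for all `a` and `λ_{a,b} λ_{b,a} = 1` for all `a, b`.  Let
`c⁰` be any family of units indexed by the square `0 ≤ a, b ≤ N - 2` with
`c⁰_{a,a} = 1` and `c⁰_{a,b} c⁰_{b,a} = 1`.  Then there is a family
`c : ℤ × ℤ → kˣ` with `∏_{j=a}^{a+N-1} c_{j,b} = h_{a,b}`, `c_{a,a} = 1`,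
`c_{a,b} c_{b,a} = 1`, and `c_{a,b} = c⁰_{a,b}` on the square
`0 ≤ a, b ≤ N - 2`. -/
theorem stmt1 {k : Type*} [Field k] (N : ℕ) (hN : 0 < N) (h : ℤ × ℤ → kˣ)
    (hdiag : ∀ a : ℤ, (∏ j ∈ Finset.Icc a (a + (N : ℤ) - 1), h (a, j)) = 1)
    (hanti : ∀ a b : ℤ,
      (∏ j ∈ Finset.Icc b (b + (N : ℤ) - 1), h (a, j)) *
      (∏ j ∈ Finset.Icc a (a + (N : ℤ) - 1), h (b, j)) = 1)
    (c0 : ℤ × ℤ → kˣ)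
    (hc0diag : ∀ a : ℤ, 0 ≤ a → a ≤ (N : ℤ) - 2 → c0 (a, a) = 1)
    (hc0anti : ∀ a b : ℤ, 0 ≤ a → a ≤ (N : ℤ) - 2 → 0 ≤ b → b ≤ (N : ℤ) - 2 →
      c0 (a, b) * c0 (b, a) = 1) :
    ∃ c : ℤ × ℤ → kˣ,
      (∀ a b : ℤ, ∏ j ∈ Finset.Icc a (a + (N : ℤ) - 1), c (j, b) = h (a, b)) ∧
      (∀ a : ℤ, c (a, a) = 1) ∧
      (∀ a b : ℤ, c (a, b) * c (b, a) = 1) ∧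
      (∀ a b : ℤ, 0 ≤ a → a ≤ (N : ℤ) - 2 → 0 ≤ b → b ≤ (N : ℤ) - 2 →
        c (a, b) = c0 (a, b)) := by
  let H : ℤ × ℤ → Additive kˣ := fun p => .ofMul (h p)
  have hdiag' : ∀ a, lam H N a a = 0 := fun a =>
    Additive.toMul.injective (by simpa [lam, toMul_windowSum, H] using hdiag a)
  have hanti' : ∀ a b, lam H N a b + lam H N b a = 0 := fun a b =>
    Additive.toMul.injective (by simpa [lam, toMul_windowSum, H] using hanti a b)
  have hN' : (0 : ℤ) < N := by exact_mod_cast hN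
  have hsquare : ∀ a, a ∈ Ico 0 ((N : ℤ) - 1) ↔ 0 ≤ a ∧ a ≤ (N : ℤ) - 2 := fun a => by
    rw [mem_Ico]
    omega
  obtain ⟨d, hd_diag, hd_anti, hd_col, hd_c0⟩ := exists_antisymm_extension_with_column_sums hN'
    (fun p => .ofMul (c0 p))
    (fun a ha => congrArg Additive.ofMul (hc0diag a ((hsquare a).1 ha).1 ((hsquare a).1 ha).2))
    (fun a ha b hb => congrArg Additive.ofMul <| hc0anti a b ((hsquare a).1 ha).1
      ((hsquare a).1 ha).2 ((hsquare b).1 hb).1 ((hsquare b).1 hb).2)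
    (fun b => H (0, b)) (by simpa [lam, windowSum] using hdiag' 0)
  obtain ⟨c, hc_sum, hc_diag, hc_anti, hc_d⟩ :=
    exists_antisymm_windowSum_eq hN hdiag' hanti' d hd_diag hd_anti hd_col
  refine ⟨fun p => (c p).toMul,
    fun a b => (toMul_windowSum N _ a).symm.trans (congrArg Additive.toMul (hc_sum a b)),
    fun a => congrArg Additive.toMul (hc_diag a), fun a b => congrArg Additive.toMul (hc_anti a b),
    fun a b ha ha' hb hb' => congrArg Additive.toMul ?_⟩
  rw [hc_d a (mem_Ico.2 ⟨ha, by omega⟩) b (mem_Ico.2 ⟨hb, by omega⟩)]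
  exact hd_c0 a ((hsquare a).2 ⟨ha, ha'⟩) b ((hsquare b).2 ⟨hb, hb'⟩)
end

section
/- Let k be a field, let N be a positive integer, and let h : ℤ × ℤ → kˣ be a family of nonzero elements of k. Define λ_{a,b} := ∏_{j=b}^{b+N-1} h_{a,j} for a, b ∈ ℤ, and assume λ_{a,b} · λ_{b,a} = 1 for all a, b ∈ ℤ. Define φ_{a,b} := h_{a+1,b} · h_{a,b}⁻¹ and ψ_{a,b} := h_{b,a} · h_{b+1,a}⁻¹ for a, b ∈ ℤ. Then the cocycle identity φ_{a,b+N} · ψ_{a,b} = ψ_{a+N,b} · φ_{a,b} holds for all a, b ∈ ℤ. -/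
/-!
Sliding the window `[b, b + N - 1]` one step to the right gives
`h (a, b + N) = h (a, b) * Λ a (b + 1) / Λ a b`. Substituting this into both sides and
using `Λ b a = (Λ a b)⁻¹` turns each side into
`h (a + 1, b) / h (a, b) * h (b, a) / h (b + 1, a) * Λ a b * Λ (a + 1) (b + 1) / (Λ (a + 1) b * Λ a (b + 1))`.
-/

open Finset

theorem Finset.mul_prod_Icc_succ_eq {M : Type*} [CommMonoid M] (f : ℤ → M) (b : ℤ) (n : ℕ) :
    f b * ∏ j ∈ Icc (b + 1) (b + 1 + n - 1), f j = f (b + n) * ∏ j ∈ Icc b (b + n - 1), f j := by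
  have hb : b ≤ b + n := by omega
  calc f b * ∏ j ∈ Icc (b + 1) (b + 1 + n - 1), f j
      = ∏ j ∈ insert b (Ioc b (b + n)), f j := by
        rw [prod_insert left_notMem_Ioc]
        congr 2; ext j; simp only [mem_Ioc, mem_Icc]; omega
    _ = ∏ j ∈ insert (b + n) (Ico b (b + n)), f j := by
        rw [Ioc_insert_left hb, Ico_insert_right hb]
    _ = f (b + n) * ∏ j ∈ Icc b (b + n - 1), f j := by
        rw [prod_insert right_notMem_Ico]
        congr 2; ext j; simp only [mem_Ico, mem_Icc]; omega

theorem Finset.eq_mul_prod_Icc_succ_div {G : Type*} [CommGroup G] (f : ℤ → G) (b : ℤ) (n : ℕ) :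
    f (b + n) = f b * (∏ j ∈ Icc (b + 1) (b + 1 + n - 1), f j) / ∏ j ∈ Icc b (b + n - 1), f j :=
  eq_div_iff_mul_eq'.mpr (mul_prod_Icc_succ_eq f b n).symm

theorem cocycle_of_window_prod_antisymm {G : Type*} [CommGroup G] (N : ℕ) (h : ℤ × ℤ → G)
    (hanti : ∀ a b : ℤ,
      (∏ j ∈ Icc b (b + (N : ℤ) - 1), h (a, j)) * (∏ j ∈ Icc a (a + (N : ℤ) - 1), h (b, j)) = 1)
    (a b : ℤ) :
    (h (a + 1, b + N) * (h (a, b + N))⁻¹) * (h (b, a) * (h (b + 1, a))⁻¹) =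
      (h (b, a + N) * (h (b + 1, a + N))⁻¹) * (h (a + 1, b) * (h (a, b))⁻¹) := by
  set Λ : ℤ → ℤ → G := fun a b => ∏ j ∈ Icc b (b + (N : ℤ) - 1), h (a, j)
  have shift (a b : ℤ) : h (a, b + N) = h (a, b) * Λ a (b + 1) / Λ a b :=
    eq_mul_prod_Icc_succ_div (fun j => h (a, j)) b N
  have antisymm (a b : ℤ) : Λ b a = (Λ a b)⁻¹ := eq_inv_of_mul_eq_one_right (hanti a b)
  rw [shift (a + 1), shift a, shift b, shift (b + 1), antisymm a b, antisymm a (b + 1),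
    antisymm (a + 1) b, antisymm (a + 1) (b + 1)]
  simp only [div_eq_mul_inv, mul_inv_rev, inv_inv]
  simp only [mul_comm, mul_left_comm, mul_assoc]

theorem stmt2_general {k : Type*} [Field k] (N : ℕ) (h : ℤ × ℤ → kˣ)
    (hanti : ∀ a b : ℤ,
      (∏ j ∈ Finset.Icc b (b + (N : ℤ) - 1), h (a, j)) *
      (∏ j ∈ Finset.Icc a (a + (N : ℤ) - 1), h (b, j)) = 1) :
    ∀ a b : ℤ,
      (h (a + 1, b + N) * (h (a, b + N))⁻¹) * (h (b, a) * (h (b + 1, a))⁻¹) =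
      (h (b, a + N) * (h (b + 1, a + N))⁻¹) * (h (a + 1, b) * (h (a, b))⁻¹) :=
  cocycle_of_window_prod_antisymm N h hanti

/-- Let `k` be a field, `N` a positive integer, and
`h : ℤ × ℤ → kˣ`.  Set `λ_{a,b} := ∏_{j=b}^{b+N-1} h_{a,j}` and assume
`λ_{a,b} λ_{b,a} = 1` for all `a, b ∈ ℤ`.  With
`φ_{a,b} := h_{a+1,b} h_{a,b}⁻¹` and `ψ_{a,b} := h_{b,a} h_{b+1,a}⁻¹`, the
cocycle identity `φ_{a,b+N} ψ_{a,b} = ψ_{a+N,b} φ_{a,b}` holds for all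
`a, b ∈ ℤ`. -/
theorem stmt2 {k : Type*} [Field k] (N : ℕ) (hN : 0 < N) (h : ℤ × ℤ → kˣ)
    (hanti : ∀ a b : ℤ,
      (∏ j ∈ Finset.Icc b (b + (N : ℤ) - 1), h (a, j)) *
      (∏ j ∈ Finset.Icc a (a + (N : ℤ) - 1), h (b, j)) = 1) :
    ∀ a b : ℤ,
      (h (a + 1, b + N) * (h (a, b + N))⁻¹) * (h (b, a) * (h (b + 1, a))⁻¹) =
      (h (b, a + N) * (h (b + 1, a + N))⁻¹) * (h (a + 1, b) * (h (a, b))⁻¹) :=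
  stmt2_general N h hanti
end

section
/- Let k be a field. Let φ : ℤ × ℤ → k[[v]] be a family of formal power series in one variable over k, and for a, b ∈ ℤ let c_{a,b} ∈ k denote the constant coefficient of φ_{a,b}. Assume that each c_{a,b} is nonzero, that φ_{a,a} = 1 for all a ∈ ℤ, and that c_{a,b} · c_{b,a} = 1 for all a, b ∈ ℤ. Define C_{a,b}(u,v) := φ_{a,b}(v) · φ_{b,a}(u)⁻¹ · c_{b,a} in k[[u,v]], where φ_{a,b}(v) and φ_{b,a}(u) denote the images of φ_{a,b} and φ_{b,a} under the k-algebra homomorphisms k[[v]] → k[[u,v]] sending the variable to v and to u respectively, and where φ_{b,a}(u) is invertible in k[[u,v]] because its constant coefficient c_{b,a} is nonzero. Then: (i) C_{a,a}(u,v) = 1 for all a ∈ ℤ; (ii) C_{a,b}(u,v) · C_{b,a}(v,u) = 1 for all a, b ∈ ℤ, where C_{b,a}(v,u) denotes the image of C_{b,a} under the k-algebra automorphism of k[[u,v]] swapping the two variables; and (iii) the image of C_{a,b} under the k-algebra homomorphism k[[u,v]] → k[[z]] sending u ↦ 0 and v ↦ z equals φ_{a,b}(z), for all a, b ∈ ℤ.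 -/
open Finset

/-- The underlying function of the `k`-algebra automorphism of `k[[u,v]]`
(realized as `MvPowerSeries (Fin 2) k`, with `u` the variable of index `0`
and `v` the variable of index `1`) that swaps the two variables `u` and `v`:
the coefficient of the image at a monomial is the coefficient of the original
series at the monomial with the two exponents exchanged. -/
noncomputable def swapVars {k : Type*} [Semiring k] (f : MvPowerSeries (Fin 2) k) :
    MvPowerSeries (Fin 2) k :=
  fun d => MvPowerSeries.coeff (Finsupp.equivMapDomain (Equiv.swap (0 : Fin 2) 1) d) f

/-- The underlying function of the `k`-algebra homomorphism
`k[[u,v]] → k[[z]]` sending `u ↦ 0` and `v ↦ z`. -/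
noncomputable def evalUZeroVZ {k : Type*} [Semiring k] (f : MvPowerSeries (Fin 2) k) :
    PowerSeries k :=
  PowerSeries.mk fun n => MvPowerSeries.coeff (Finsupp.single (1 : Fin 2) n) f

/-- The underlying function of the `k`-algebra homomorphism
`k[[X]] → k[[u,v]]` sending the variable `X` to the variable of index `i`
(so `i = 0` gives `X ↦ u` and `i = 1` gives `X ↦ v`): the coefficient of the
image at a monomial `d` is the coefficient of the original series at `d i`
if `d` is supported at `i`, and `0` otherwise. -/
noncomputable def psToMv {k : Type*} [Semiring k] (i : Fin 2) (f : PowerSeries k) :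
    MvPowerSeries (Fin 2) k :=
  fun d =>
    if d = Finsupp.single i (d i) then PowerSeries.coeff (d i) f else 0

/-- The family `C_{a,b}(u,v) := φ_{a,b}(v) · φ_{b,a}(u)⁻¹ · c_{b,a}` of
elements of `k[[u,v]]`, where `c_{b,a}` denotes the constant coefficient of
`φ_{b,a}` and the inverse is the power-series inverse over the field `k`
(which is the genuine inverse whenever the constant coefficient `c_{b,a}`
is nonzero). -/
noncomputable def Cfam {k : Type*} [Field k] (φ : ℤ × ℤ → PowerSeries k) (a b : ℤ) :
    MvPowerSeries (Fin 2) k :=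
  psToMv 1 (φ (a, b)) * (psToMv 0 (φ (b, a)))⁻¹ *
    MvPowerSeries.C (PowerSeries.constantCoeff (φ (b, a)))

/-! All maps of the statement are `k`-algebra homomorphisms from Mathlib: `φ ↦ φ(u)` and
`φ ↦ φ(v)` are `MvPowerSeries.rename` along the two points of `Fin 2`, the swap is `rename`
along the transposition, and `u ↦ 0, v ↦ z` is `MvPowerSeries.killCompl`. Hence
`C_{a,a} = 1` since everything is unital. The swap turns
`C_{b,a}(u,v) = φ_{b,a}(v) φ_{a,b}(u)⁻¹ c_{a,b}` into `φ_{b,a}(u) φ_{a,b}(v)⁻¹ c_{a,b}`,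
the inverse of `C_{a,b}` because `c_{a,b} c_{b,a} = 1`. Finally `u ↦ 0` sends `φ_{b,a}(u)` to
its constant coefficient `c_{b,a}`, which cancels the factor `c_{b,a}` in `C_{a,b}`. -/

namespace MvPowerSeries

variable {σ τ ρ R : Type*} [CommSemiring R]

theorem coeff_rename_equiv (e : σ ≃ τ) (p : MvPowerSeries σ R) (d : τ →₀ ℕ) :
    coeff d (rename e p) = coeff (d.equivMapDomain e.symm) p := by
  simpa [Finsupp.embDomain_eq_mapDomain, ← Finsupp.equivMapDomain_eq_mapDomain,
    ← Finsupp.equivMapDomain_trans] using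
    coeff_embDomain_rename e.toEmbedding p (d.equivMapDomain e.symm)

theorem killCompl_rename_of_disjoint (e : σ ↪ τ) (f : ρ → τ) [Filter.TendstoCofinite f]
    (h : Disjoint (Set.range e) (Set.range f)) (p : MvPowerSeries ρ R) :
    killCompl e (rename f p) = C (constantCoeff p) := by
  classical
  ext x
  rw [coeff_killCompl, coeff_C]
  split_ifs with hx
  · simp [hx]
  · obtain ⟨s, hs⟩ := Finsupp.ne_iff.mp hx
    refine coeff_rename_eq_zero f p fun ⟨y, hy⟩ => hs ?_
    have hes : e s ∉ Set.range f := h.notMem_of_mem_left (Set.mem_range_self s)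
    rw [← Finsupp.embDomain_apply_self e x s, ← hy, Finsupp.mapDomain_of_notMem_range y _ hes]
    rfl

end MvPowerSeries

theorem map_mvPowerSeries_inv {σ τ k F : Type*} [Field k]
    [FunLike F (MvPowerSeries σ k) (MvPowerSeries τ k)]
    [RingHomClass F (MvPowerSeries σ k) (MvPowerSeries τ k)] (ψ : F) {p : MvPowerSeries σ k}
    (hp : MvPowerSeries.constantCoeff p ≠ 0) : ψ p⁻¹ = (ψ p)⁻¹ := by
  have h : ψ p * ψ p⁻¹ = 1 := by rw [← map_mul, MvPowerSeries.mul_inv_cancel p hp, map_one]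
  have hψp : MvPowerSeries.constantCoeff (ψ p) ≠ 0 :=
    left_ne_zero_of_mul_eq_one (by rw [← map_mul, h, map_one])
  rw [MvPowerSeries.eq_inv_iff_mul_eq_one hψp, mul_comm, h]

section Rename

open MvPowerSeries

variable {k : Type*} [CommSemiring k]

theorem swapVars_eq_rename (f : MvPowerSeries (Fin 2) k) :
    swapVars f = rename (Equiv.swap (0 : Fin 2) 1) f := by
  ext d
  rw [coeff_rename_equiv, Equiv.symm_swap]
  rfl

theorem psToMv_eq_rename (i : Fin 2) (f : PowerSeries k) :
    psToMv i f = rename (Function.Embedding.punit i) f := by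
  ext d
  by_cases hd : d = Finsupp.single i (d i)
  · obtain ⟨n, rfl⟩ : ∃ n, d = Finsupp.single i n := ⟨_, hd⟩
    have hemb : Finsupp.single i n =
        Finsupp.embDomain (Function.Embedding.punit i) (Finsupp.single () n) :=
      (Finsupp.embDomain_single (Function.Embedding.punit i) () n).symm
    rw [hemb, coeff_embDomain_rename, ← hemb,
      ← PowerSeries.coeff_def (Finsupp.single_eq_same (a := ()))]
    exact (if_pos hd).trans (by rw [Finsupp.single_eq_same])
  · rw [coeff_rename_eq_zero]
    · exact if_neg hd
    rintro ⟨y, rfl⟩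
    apply hd
    rw [Finsupp.unique_single y, Finsupp.mapDomain_single]
    simp [Function.Embedding.punit]

theorem evalUZeroVZ_eq_killCompl (f : MvPowerSeries (Fin 2) k) :
    evalUZeroVZ f = killCompl (Function.Embedding.punit (1 : Fin 2)) f := by
  ext n
  rw [PowerSeries.coeff_def (s := Finsupp.single () n) (by simp), coeff_killCompl,
    Finsupp.embDomain_single]
  simp [evalUZeroVZ, Function.Embedding.punit]

theorem constantCoeff_psToMv (i : Fin 2) (f : PowerSeries k) :
    constantCoeff (psToMv i f) = PowerSeries.constantCoeff f := by
  rw [psToMv_eq_rename, constantCoeff_rename]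
  rfl

theorem swapVars_psToMv (i : Fin 2) (f : PowerSeries k) :
    swapVars (psToMv i f) = psToMv (Equiv.swap 0 1 i) f := by
  rw [swapVars_eq_rename, psToMv_eq_rename, psToMv_eq_rename, rename_rename]
  rfl

end Rename

section Cfam

open MvPowerSeries

variable {k : Type*} [Field k] (φ : ℤ × ℤ → PowerSeries k)

theorem Cfam_self {a : ℤ} (h : φ (a, a) = 1) : Cfam φ a a = 1 := by
  simp [Cfam, h, psToMv_eq_rename]

theorem swapVars_Cfam {a b : ℤ} (hab : PowerSeries.constantCoeff (φ (a, b)) ≠ 0) :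
    swapVars (Cfam φ b a) =
      psToMv 0 (φ (b, a)) * (psToMv 1 (φ (a, b)))⁻¹ *
        C (PowerSeries.constantCoeff (φ (a, b))) := by
  have hX : constantCoeff (psToMv 0 (φ (a, b))) ≠ 0 := by rwa [constantCoeff_psToMv]
  rw [Cfam, swapVars_eq_rename, map_mul, map_mul, map_mvPowerSeries_inv _ hX, rename_C,
    ← swapVars_eq_rename, ← swapVars_eq_rename, swapVars_psToMv, swapVars_psToMv,
    Equiv.swap_apply_left, Equiv.swap_apply_right]

theorem Cfam_mul_swapVars_Cfam {a b : ℤ}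
    (h : PowerSeries.constantCoeff (φ (a, b)) * PowerSeries.constantCoeff (φ (b, a)) = 1) :
    Cfam φ a b * swapVars (Cfam φ b a) = 1 := by
  have hX : psToMv 1 (φ (a, b)) * (psToMv 1 (φ (a, b)))⁻¹ = 1 :=
    MvPowerSeries.mul_inv_cancel _
      (by rw [constantCoeff_psToMv]; exact left_ne_zero_of_mul_eq_one h)
  have hY : psToMv 0 (φ (b, a)) * (psToMv 0 (φ (b, a)))⁻¹ = 1 :=
    MvPowerSeries.mul_inv_cancel _
      (by rw [constantCoeff_psToMv]; exact right_ne_zero_of_mul_eq_one h)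
  rw [swapVars_Cfam φ (left_ne_zero_of_mul_eq_one h), Cfam]
  set X := psToMv 1 (φ (a, b))
  set Y := psToMv 0 (φ (b, a))
  calc X * Y⁻¹ * C (PowerSeries.constantCoeff (φ (b, a))) *
        (Y * X⁻¹ * C (PowerSeries.constantCoeff (φ (a, b))))
      = X * X⁻¹ * (Y * Y⁻¹) *
          C (PowerSeries.constantCoeff (φ (a, b)) * PowerSeries.constantCoeff (φ (b, a))) := by
        rw [map_mul]; ring
    _ = 1 := by rw [hX, hY, h, map_one, one_mul, one_mul]

theorem evalUZeroVZ_Cfam {a b : ℤ} (hba : PowerSeries.constantCoeff (φ (b, a)) ≠ 0) :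
    evalUZeroVZ (Cfam φ a b) = φ (a, b) := by
  set E : MvPowerSeries (Fin 2) k →ₐ[k] PowerSeries k := killCompl (Function.Embedding.punit 1)
  have hEY : E (psToMv 0 (φ (b, a))) = C (PowerSeries.constantCoeff (φ (b, a))) := by
    rw [psToMv_eq_rename]
    refine killCompl_rename_of_disjoint _ _ ?_ _
    rw [Set.disjoint_left]
    rintro _ ⟨_, rfl⟩ ⟨_, h⟩
    exact Fin.zero_ne_one h
  have hEinv : E (psToMv 0 (φ (b, a)))⁻¹ * C (PowerSeries.constantCoeff (φ (b, a))) = 1 := by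
    rw [← hEY, ← map_mul, MvPowerSeries.inv_mul_cancel _ (by rwa [constantCoeff_psToMv]),
      map_one]
  rw [evalUZeroVZ_eq_killCompl, Cfam, map_mul, map_mul, killCompl_C, psToMv_eq_rename,
    killCompl_rename_app, mul_assoc, hEinv, mul_one]

end Cfam

/-- Let `k` be a field and `φ : ℤ × ℤ → k[[v]]` a family of
power series whose constant coefficients `c_{a,b}` are all nonzero, with
`φ_{a,a} = 1` and `c_{a,b} c_{b,a} = 1` for all `a, b ∈ ℤ`.  Then the family
`C_{a,b}(u,v) := φ_{a,b}(v) · φ_{b,a}(u)⁻¹ · c_{b,a}` in `k[[u,v]]` satisfies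
`C_{a,a}(u,v) = 1`, `C_{a,b}(u,v) · C_{b,a}(v,u) = 1` (the second factor being
the image of `C_{b,a}` under the swap of the two variables), and the image of
`C_{a,b}` under `u ↦ 0`, `v ↦ z` equals `φ_{a,b}(z)`. -/
theorem stmt5 {k : Type*} [Field k] (φ : ℤ × ℤ → PowerSeries k)
    (hne : ∀ a b : ℤ, PowerSeries.constantCoeff (φ (a, b)) ≠ 0)
    (hdiag : ∀ a : ℤ, φ (a, a) = 1)
    (hanti : ∀ a b : ℤ,
      PowerSeries.constantCoeff (φ (a, b)) *
      PowerSeries.constantCoeff (φ (b, a)) = 1) :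
    (∀ a : ℤ, Cfam φ a a = 1) ∧
    (∀ a b : ℤ, Cfam φ a b * swapVars (Cfam φ b a) = 1) ∧
    (∀ a b : ℤ, evalUZeroVZ (Cfam φ a b) = φ (a, b)) :=
  ⟨fun a => Cfam_self φ (hdiag a), fun a b => Cfam_mul_swapVars_Cfam φ (hanti a b),
    fun a b => evalUZeroVZ_Cfam φ (hne b a)⟩
end
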